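/- Let (φ_i)_{i∈I} and (ψ_i)_{i∈I} be two pointwise-bounded families of non-negative real-valued convex functions on a real vector space Z, and define θ_{i,p}, θ_p and θ by 2θ_{i,p}(x)^2 = φ_i(x)^2 + p^{-1}ψ_i(x)^2, θ_p(x) = sup_{i∈I} θ_{i,p}(x), θ(x)^2 = Σ_{p=1}^∞ 2^{-p} θ_p(x)^2. Let x and x_r (r ∈ ℕ) be elements of Z with (1/2)θ(x)^2 + (1/2)θ(x_r)^2 − θ((x+x_r)/2)^2 → 0 as r → ∞, and assume in addition that the supremum sup_{i∈I} φ_i(x) is strongly attained at some j ∈ I. Then (1/2)ψ_j(x)^2 + (1/2)ψ_j(x_r)^2 − ψ_j((x+x_r)/2)^2 → 0 as r → ∞. -/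

import Mathlib

open Filter Topology

/-- `θ_{i,p}`, the nonnegative function determined by `2 θ_{i,p}(x)² = φ_i(x)² + p⁻¹ ψ_i(x)²`. -/
noncomputable def thetaIP {Z I : Type*} (φ ψ : I → Z → ℝ) (i : I) (p : ℕ) (x : Z) : ℝ :=
  Real.sqrt ((φ i x ^ 2 + (p : ℝ)⁻¹ * ψ i x ^ 2) / 2)

/-- `θ_p(x) = sup_{i ∈ I} θ_{i,p}(x)`. -/
noncomputable def thetaP {Z I : Type*} (φ ψ : I → Z → ℝ) (p : ℕ) (x : Z) : ℝ :=
  ⨆ i : I, thetaIP φ ψ i p x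

/-- `θ`, the nonnegative function determined by `θ(x)² = Σ_{p=1}^∞ 2^{-p} θ_p(x)²`. -/
noncomputable def theta {Z I : Type*} (φ ψ : I → Z → ℝ) (x : Z) : ℝ :=
  Real.sqrt (∑' p : ℕ, (1 / 2 : ℝ) ^ (p + 1) * thetaP φ ψ (p + 1) x ^ 2)

private lemma mink (c u1 v1 u2 v2 : ℝ) (hc : 0 ≤ c) (hu1 : 0 ≤ u1) (hv1 : 0 ≤ v1)
    (hu2 : 0 ≤ u2) (hv2 : 0 ≤ v2) :
    Real.sqrt ((((u1 + u2)/2)^2 + c*((v1 + v2)/2)^2)/2)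
      ≤ (Real.sqrt ((u1^2 + c*v1^2)/2) + Real.sqrt ((u2^2 + c*v2^2)/2))/2 := by
  set A := Real.sqrt ((u1^2 + c*v1^2)/2) with hA
  set B := Real.sqrt ((u2^2 + c*v2^2)/2) with hB
  have hA0 : 0 ≤ A := Real.sqrt_nonneg _
  have hB0 : 0 ≤ B := Real.sqrt_nonneg _
  have hA2 : A^2 = (u1^2 + c*v1^2)/2 := Real.sq_sqrt (by positivity)
  have hB2 : B^2 = (u2^2 + c*v2^2)/2 := Real.sq_sqrt (by positivity)
  have hcs : (u1*u2 + c*(v1*v2))/2 ≤ A*B := by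
    have h0 : (0:ℝ) ≤ (u1*u2 + c*(v1*v2))/2 := by positivity
    have h1 : ((u1*u2 + c*(v1*v2))/2)^2 ≤ (A*B)^2 := by
      rw [mul_pow, hA2, hB2]
      nlinarith [mul_nonneg hc (sq_nonneg (u1*v2 - u2*v1))]
    calc (u1*u2 + c*(v1*v2))/2 = Real.sqrt (((u1*u2 + c*(v1*v2))/2)^2) := (Real.sqrt_sq h0).symm
      _ ≤ Real.sqrt ((A*B)^2) := Real.sqrt_le_sqrt h1
      _ = A*B := Real.sqrt_sq (mul_nonneg hA0 hB0)
  have harg : (((u1 + u2)/2)^2 + c*((v1 + v2)/2)^2)/2 ≤ ((A + B)/2)^2 := by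
    nlinarith [hcs, hA2, hB2]
  calc Real.sqrt ((((u1 + u2)/2)^2 + c*((v1 + v2)/2)^2)/2)
      ≤ Real.sqrt (((A + B)/2)^2) := Real.sqrt_le_sqrt harg
    _ = (A + B)/2 := Real.sqrt_sq (by positivity)

private lemma thetaIP_midpoint' (c fu fv fm gu gv gm : ℝ) (hc : 0 ≤ c)
    (hfu : 0 ≤ fu) (hfv : 0 ≤ fv) (hfm : 0 ≤ fm) (hgu : 0 ≤ gu) (hgv : 0 ≤ gv) (hgm : 0 ≤ gm)
    (hf : fm ≤ (fu + fv)/2) (hg : gm ≤ (gu + gv)/2) :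
    Real.sqrt ((fm^2 + c*gm^2)/2)
      ≤ (Real.sqrt ((fu^2 + c*gu^2)/2) + Real.sqrt ((fv^2 + c*gv^2)/2))/2 := by
  have h1 : Real.sqrt ((fm^2 + c*gm^2)/2) ≤ Real.sqrt ((((fu+fv)/2)^2 + c*((gu+gv)/2)^2)/2) := by
    apply Real.sqrt_le_sqrt
    have h2 : fm^2 ≤ ((fu+fv)/2)^2 := pow_le_pow_left₀ hfm hf 2
    have h3 : gm^2 ≤ ((gu+gv)/2)^2 := pow_le_pow_left₀ hgm hg 2
    have h4 := mul_le_mul_of_nonneg_left h3 hc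
    linarith
  exact h1.trans (mink c fu gu fv gv hc hfu hgu hfv hgv)


private lemma thetaIP_midpoint {Z I : Type*} [AddCommGroup Z] [Module ℝ Z]
    (φ ψ : I → Z → ℝ) (i : I) (p : ℕ)
    (hφ0 : ∀ i x, 0 ≤ φ i x) (hψ0 : ∀ i x, 0 ≤ ψ i x)
    (hφconv : ∀ i, ConvexOn ℝ Set.univ (φ i)) (hψconv : ∀ i, ConvexOn ℝ Set.univ (ψ i))
    (u v : Z) :
    thetaIP φ ψ i p ((1/2 : ℝ) • (u + v)) ≤ (thetaIP φ ψ i p u + thetaIP φ ψ i p v)/2 := by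
  have hsmul : (1/2 : ℝ) • (u + v) = (1/2:ℝ) • u + (1/2:ℝ) • v := smul_add _ _ _
  have hφm : φ i ((1/2:ℝ) • (u+v)) ≤ (φ i u + φ i v)/2 := by
    have h := (hφconv i).2 (Set.mem_univ u) (Set.mem_univ v)
      (by norm_num : (0:ℝ) ≤ 1/2) (by norm_num : (0:ℝ) ≤ 1/2) (by norm_num)
    simp only [smul_eq_mul] at h; rw [hsmul]; linarith
  have hψm : ψ i ((1/2:ℝ) • (u+v)) ≤ (ψ i u + ψ i v)/2 := by
    have h := (hψconv i).2 (Set.mem_univ u) (Set.mem_univ v)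
      (by norm_num : (0:ℝ) ≤ 1/2) (by norm_num : (0:ℝ) ≤ 1/2) (by norm_num)
    simp only [smul_eq_mul] at h; rw [hsmul]; linarith
  have hc : (0:ℝ) ≤ ((p:ℝ))⁻¹ := by positivity
  exact thetaIP_midpoint' ((p:ℝ))⁻¹ (φ i u) (φ i v) (φ i ((1/2:ℝ)•(u+v))) (ψ i u) (ψ i v) (ψ i ((1/2:ℝ)•(u+v))) hc (hφ0 i u) (hφ0 i v) (hφ0 i _) (hψ0 i u) (hψ0 i v) (hψ0 i _) hφm hψm

set_option maxHeartbeats 2000000 in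
/-- Corollary 6.2 to Deville's Lemma: if moreover the supremum `sup_i φ_i(x)` is
strongly attained at `j ∈ I`, then the LUR hypothesis holds for `ψ_j`. -/
theorem deville_corollary {Z I : Type*} [AddCommGroup Z] [Module ℝ Z] [Nonempty I]
    (φ ψ : I → Z → ℝ)
    (hφ0 : ∀ i x, 0 ≤ φ i x) (hψ0 : ∀ i x, 0 ≤ ψ i x)
    (hφconv : ∀ i, ConvexOn ℝ Set.univ (φ i)) (hψconv : ∀ i, ConvexOn ℝ Set.univ (ψ i))
    (hφbdd : ∀ x : Z, BddAbove (Set.range fun i => φ i x))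
    (hψbdd : ∀ x : Z, BddAbove (Set.range fun i => ψ i x))
    (x : Z) (xr : ℕ → Z)
    (hlur : Tendsto (fun r => (1 / 2) * theta φ ψ x ^ 2 + (1 / 2) * theta φ ψ (xr r) ^ 2
        - theta φ ψ ((1 / 2 : ℝ) • (x + xr r)) ^ 2) atTop (nhds 0))
    (j : I) (hstrong : sSup ((fun i => φ i x) '' {i : I | i ≠ j}) < φ j x) :
    Tendsto (fun r => (1 / 2) * ψ j x ^ 2 + (1 / 2) * ψ j (xr r) ^ 2
      - ψ j ((1 / 2 : ℝ) • (x + xr r)) ^ 2) atTop (nhds 0) := by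
  classical
  set m : ℕ → Z := fun r => (1/2 : ℝ) • (x + xr r) with hmdef
  have hIP0 : ∀ (i : I) (p : ℕ) (y : Z), 0 ≤ thetaIP φ ψ i p y := fun i p y => Real.sqrt_nonneg _
  set F : Z → ℝ := fun y => sSup (Set.range fun i => φ i y) with hFdef
  set G : Z → ℝ := fun y => sSup (Set.range fun i => ψ i y) with hGdef
  have hFle : ∀ i y, φ i y ≤ F y := fun i y => le_csSup (hφbdd y) ⟨i, rfl⟩
  have hGle : ∀ i y, ψ i y ≤ G y := fun i y => le_csSup (hψbdd y) ⟨i, rfl⟩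
  set B : Z → ℝ := fun y => Real.sqrt ((F y^2 + G y^2)/2) with hBdef
  have hinv1 : ∀ p : ℕ, ((p:ℝ))⁻¹ ≤ 1 := by
    intro p
    rcases Nat.eq_zero_or_pos p with h | h
    · simp [h]
    · have h1 : (1:ℝ) ≤ (p:ℝ) := by exact_mod_cast h
      exact inv_le_one_of_one_le₀ h1
  have hIPle : ∀ i p y, thetaIP φ ψ i p y ≤ B y := by
    intro i p y
    apply Real.sqrt_le_sqrt
    have h1 : φ i y ^2 ≤ F y ^2 := pow_le_pow_left₀ (hφ0 i y) (hFle i y) 2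
    have h2 : ψ i y ^2 ≤ G y ^2 := pow_le_pow_left₀ (hψ0 i y) (hGle i y) 2
    have h3 : ((p:ℝ))⁻¹ * ψ i y ^2 ≤ ψ i y^2 := by
      nlinarith [mul_le_mul_of_nonneg_right (hinv1 p) (sq_nonneg (ψ i y))]
    linarith
  have hbdd : ∀ (p : ℕ) (y : Z), BddAbove (Set.range fun i => thetaIP φ ψ i p y) :=
    fun p y => ⟨B y, by rintro z ⟨i, rfl⟩; exact hIPle i p y⟩
  have hP0 : ∀ (p : ℕ) (y : Z), 0 ≤ thetaP φ ψ p y :=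
    fun p y => Real.iSup_nonneg (fun i => hIP0 i p y)
  have hPle : ∀ (i : I) (p : ℕ) (y : Z), thetaIP φ ψ i p y ≤ thetaP φ ψ p y :=
    fun i p y => le_ciSup (hbdd p y) i
  have hPB : ∀ p y, thetaP φ ψ p y ≤ B y := fun p y => ciSup_le (fun i => hIPle i p y)
  have hPmid : ∀ (p : ℕ) (r : ℕ),
      thetaP φ ψ p (m r) ≤ (thetaP φ ψ p x + thetaP φ ψ p (xr r))/2 := by
    intro p r
    apply ciSup_le
    intro i
    calc thetaIP φ ψ i p (m r) ≤ (thetaIP φ ψ i p x + thetaIP φ ψ i p (xr r))/2 :=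
        thetaIP_midpoint φ ψ i p hφ0 hψ0 hφconv hψconv x (xr r)
      _ ≤ _ := by have h1 := hPle i p x; have h2 := hPle i p (xr r); linarith
  have hsum : ∀ y : Z, Summable (fun p : ℕ => (1/2:ℝ)^(p+1) * thetaP φ ψ (p+1) y ^ 2) := by
    intro y
    refine Summable.of_nonneg_of_le (fun p => mul_nonneg (pow_nonneg (by norm_num) _) (sq_nonneg _))
      (fun p => ?_) (summable_geometric_two.mul_left (B y^2))
    have h1 : thetaP φ ψ (p+1) y ^2 ≤ B y^2 := pow_le_pow_left₀ (hP0 _ _) (hPB _ _) 2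
    have h2 : ((1:ℝ)/2)^(p+1) ≤ (1/2:ℝ)^p :=
      pow_le_pow_of_le_one (by norm_num) (by norm_num) (Nat.le_succ p)
    calc (1/2:ℝ)^(p+1) * thetaP φ ψ (p+1) y^2 ≤ (1/2:ℝ)^p * (B y^2) :=
        mul_le_mul h2 h1 (sq_nonneg _) (pow_nonneg (by norm_num) _)
      _ = B y^2 * (1/2:ℝ)^p := by ring
  have hθsq : ∀ y : Z, theta φ ψ y ^2 = ∑' p : ℕ, (1/2:ℝ)^(p+1) * thetaP φ ψ (p+1) y^2 :=
    fun y => Real.sq_sqrt (tsum_nonneg (fun p => mul_nonneg (pow_nonneg (by norm_num) _) (sq_nonneg _)))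
  set d : ℕ → ℕ → ℝ := fun q r => (1/2)*thetaP φ ψ q x^2 + (1/2)*thetaP φ ψ q (xr r)^2
    - thetaP φ ψ q (m r)^2 with hddef
  have hd0 : ∀ q r, 0 ≤ d q r := by
    intro q r
    have h1 := hPmid q r
    have h2 := hP0 q (m r)
    simp only [hddef]
    nlinarith [sq_nonneg (thetaP φ ψ q x - thetaP φ ψ q (xr r))]
  have hΔ : ∀ r : ℕ, (1/2)*theta φ ψ x^2 + (1/2)*theta φ ψ (xr r)^2 - theta φ ψ (m r)^2
      = ∑' p : ℕ, (1/2:ℝ)^(p+1) * d (p+1) r := by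
    intro r
    rw [hθsq, hθsq, hθsq]
    rw [← tsum_mul_left (a := (1/2:ℝ)), ← tsum_mul_left (a := (1/2:ℝ)),
      ← Summable.tsum_add ((hsum x).mul_left _) ((hsum (xr r)).mul_left _),
      ← Summable.tsum_sub (((hsum x).mul_left _).add ((hsum (xr r)).mul_left _)) (hsum (m r))]
    congr 1
    funext p
    simp only [hddef, Pi.add_apply, Pi.sub_apply]
    ring
  have hdsum : ∀ r : ℕ, Summable (fun p : ℕ => (1/2:ℝ)^(p+1) * d (p+1) r) := by
    intro r
    apply Summable.congr
      ((((hsum x).mul_left (1/2)).add ((hsum (xr r)).mul_left (1/2))).sub (hsum (m r)))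
    intro p
    simp only [hddef, Pi.add_apply, Pi.sub_apply]
    ring
  -- choose P
  set S := sSup ((fun i => φ i x) '' {i : I | i ≠ j}) with hSdef
  have hSbdd : BddAbove ((fun i => φ i x) '' {i : I | i ≠ j}) :=
    (hφbdd x).mono (Set.image_subset_range _ _)
  have hS0 : 0 ≤ S := by
    rcases Set.eq_empty_or_nonempty ((fun i => φ i x) '' {i : I | i ≠ j}) with h | h
    · rw [hSdef, h, Real.sSup_empty]
    · obtain ⟨z, i, hi, rfl⟩ := h
      exact le_trans (hφ0 i x) (le_csSup hSbdd ⟨i, hi, rfl⟩)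
  have hSφ : ∀ i : I, i ≠ j → φ i x ≤ S := fun i hi => le_csSup hSbdd ⟨i, hi, rfl⟩
  have hgap : 0 < φ j x ^2 - S^2 := by nlinarith [hstrong, hS0]
  obtain ⟨N, hN⟩ := exists_nat_gt ((G x)^2 / (φ j x^2 - S^2))
  set P : ℕ := N + 1 with hPdef
  have hPpos : (0:ℝ) < (P:ℝ) := by
    have : (0:ℕ) < P := Nat.succ_pos N
    exact_mod_cast this
  have hPgt : (G x)^2 / (φ j x^2 - S^2) < (P:ℝ) :=
    lt_of_lt_of_le hN (by exact_mod_cast Nat.le_succ N)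
  have hPM : ((P:ℝ))⁻¹ * (G x)^2 < φ j x^2 - S^2 := by
    have h1 : (G x)^2 < (P:ℝ) * (φ j x^2 - S^2) := (div_lt_iff₀ hgap).mp hPgt
    calc ((P:ℝ))⁻¹ * (G x)^2 < ((P:ℝ))⁻¹ * ((P:ℝ) * (φ j x^2 - S^2)) :=
        mul_lt_mul_of_pos_left h1 (inv_pos.mpr hPpos)
      _ = φ j x^2 - S^2 := by field_simp
  set t := Real.sqrt ((S^2 + (P:ℝ)⁻¹ * (G x)^2)/2) with htdef
  have ht0 : 0 ≤ t := Real.sqrt_nonneg _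
  have hti : ∀ i : I, i ≠ j → thetaIP φ ψ i P x ≤ t := by
    intro i hi
    apply Real.sqrt_le_sqrt
    have h1 : φ i x^2 ≤ S^2 := pow_le_pow_left₀ (hφ0 i x) (hSφ i hi) 2
    have h2 : ψ i x^2 ≤ (G x)^2 := pow_le_pow_left₀ (hψ0 i x) (hGle i x) 2
    have h3 := mul_le_mul_of_nonneg_left h2 (le_of_lt (inv_pos.mpr hPpos))
    linarith
  have htj : t < thetaIP φ ψ j P x := by
    apply Real.sqrt_lt_sqrt
    · have h1 : (0:ℝ) ≤ ((P:ℝ))⁻¹ * (G x)^2 := mul_nonneg (le_of_lt (inv_pos.mpr hPpos)) (sq_nonneg _)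
      nlinarith [hS0]
    · have h4 : (0:ℝ) ≤ ((P:ℝ))⁻¹ * ψ j x^2 := mul_nonneg (le_of_lt (inv_pos.mpr hPpos)) (sq_nonneg _)
      linarith [hPM]
  set a := thetaP φ ψ P x with hadef
  have hta : t < a := lt_of_lt_of_le htj (hPle j P x)
  have ha0 : 0 ≤ a := hP0 P x
  -- d P r → 0
  have hdP : Tendsto (fun r => d P r) atTop (𝓝 0) := by
    have hub : ∀ r : ℕ, d P r ≤ (2:ℝ)^P * ((1/2) * theta φ ψ x ^ 2 + (1/2) * theta φ ψ (xr r) ^ 2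
        - theta φ ψ (m r) ^ 2) := by
      intro r
      have h1 : (1/2:ℝ)^P * d P r ≤ ∑' p : ℕ, (1/2:ℝ)^(p+1) * d (p+1) r := by
        have h2 := Summable.le_tsum (hdsum r) N
          (fun q _ => mul_nonneg (pow_nonneg (by norm_num) _) (hd0 _ r))
        simpa [hPdef] using h2
      rw [← hΔ r] at h1
      have h3 : (0:ℝ) ≤ (2:ℝ)^P := by positivity
      have h4 := mul_le_mul_of_nonneg_left h1 h3
      have h5 : (2:ℝ)^P * ((1/2:ℝ)^P * d P r) = d P r := by
        rw [← mul_assoc, ← mul_pow]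
        norm_num
      linarith [h4, h5.symm.le, h5.le]
    have hup : Tendsto (fun r => (2:ℝ)^P * ((1/2) * theta φ ψ x ^ 2
        + (1/2) * theta φ ψ (xr r) ^ 2 - theta φ ψ (m r) ^ 2)) atTop (𝓝 0) := by
      have h6 := hlur.const_mul ((2:ℝ)^P)
      rw [mul_zero] at h6
      exact h6
    exact tendsto_of_tendsto_of_tendsto_of_le_of_le tendsto_const_nhds hup (fun r => hd0 P r) hub
  set b : ℕ → ℝ := fun r => thetaP φ ψ P (xr r) with hbdef
  set c : ℕ → ℝ := fun r => thetaP φ ψ P (m r) with hcdef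
  have hcb0 : ∀ r : ℕ, 0 ≤ c r := fun r => hP0 P (m r)
  have hb0 : ∀ r : ℕ, 0 ≤ b r := fun r => hP0 P (xr r)
  have hdval : ∀ r : ℕ, d P r = (1/2)*a^2 + (1/2)*(b r)^2 - (c r)^2 := fun r => rfl
  have hmidab : ∀ r : ℕ, c r ≤ (a + b r)/2 := fun r => hPmid P r
  have hb : Tendsto b atTop (𝓝 a) := by
    have hsq : ∀ r, (a - b r)^2 ≤ 4 * d P r := by
      intro r
      rw [hdval r]
      nlinarith [hmidab r, hcb0 r]
    have h1 : Tendsto (fun r => (a - b r)^2) atTop (𝓝 0) := by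
      have h4 : Tendsto (fun r => 4 * d P r) atTop (𝓝 0) := by
        have h5 := hdP.const_mul (4:ℝ)
        rw [mul_zero] at h5
        exact h5
      exact tendsto_of_tendsto_of_tendsto_of_le_of_le tendsto_const_nhds h4
        (fun r => sq_nonneg _) hsq
    have h2 : Tendsto (fun r => |a - b r|) atTop (𝓝 0) := by
      have h3 := h1.sqrt
      simp only [Real.sqrt_zero, Real.sqrt_sq_eq_abs] at h3
      exact h3
    have h2n : Tendsto (fun r => -|a - b r|) atTop (𝓝 0) := by
      have := h2.neg; rwa [neg_zero] at this
    have h4 : Tendsto (fun r => a - b r) atTop (𝓝 0) :=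
      tendsto_of_tendsto_of_tendsto_of_le_of_le h2n h2
        (fun r => neg_abs_le _) (fun r => le_abs_self _)
    have h5 := (tendsto_const_nhds : Tendsto (fun _ : ℕ => a) atTop (𝓝 a)).sub h4
    rw [sub_zero] at h5
    have h6 : ∀ r : ℕ, a - (a - b r) = b r := fun r => by ring
    exact h5.congr h6
  have hc2 : Tendsto (fun r => (c r)^2) atTop (𝓝 (a^2)) := by
    have heq : ∀ r : ℕ, (c r)^2 = (1/2)*a^2 + (1/2)*(b r)^2 - d P r := by
      intro r; rw [hdval r]; ring
    have hb2 : Tendsto (fun r => (b r)^2) atTop (𝓝 (a^2)) := by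
      have := hb.pow 2; exact this
    have h1 : Tendsto (fun r => (1/2)*a^2 + (1/2)*(b r)^2 - d P r) atTop
        (𝓝 ((1/2)*a^2 + (1/2)*a^2 - 0)) :=
      (tendsto_const_nhds.add (hb2.const_mul (1/2))).sub hdP
    have h2 : (1/2)*a^2 + (1/2)*a^2 - 0 = a^2 := by ring
    rw [h2] at h1
    exact h1.congr (fun r => (heq r).symm)
  have hc : Tendsto c atTop (𝓝 a) := by
    have h1 := hc2.sqrt
    rw [Real.sqrt_sq ha0] at h1
    exact h1.congr (fun r => Real.sqrt_sq (hcb0 r))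
  -- eventually the sup at the midpoint is attained at j
  have hev : ∀ᶠ r in atTop, (1/2)*t + (1/2)*(b r) < c r := by
    have hlim : Tendsto (fun r => c r - (1/2)*(b r)) atTop (𝓝 (a - (1/2)*a)) :=
      hc.sub (hb.const_mul (1/2))
    have hlt : (1/2)*t < a - (1/2)*a := by linarith
    have h1 := hlim.eventually (eventually_gt_nhds hlt)
    filter_upwards [h1] with r hr
    linarith [hr]
  have hcmax : ∀ r : ℕ, (1/2)*t + (1/2)*(b r) < c r → thetaIP φ ψ j P (m r) = c r := by
    intro r hr
    have h1 : c r ≤ max (thetaIP φ ψ j P (m r)) ((1/2)*t + (1/2)*(b r)) := by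
      apply ciSup_le
      intro i
      by_cases hij : i = j
      · subst hij; exact le_max_left _ _
      · refine le_trans ?_ (le_max_right _ _)
        calc thetaIP φ ψ i P (m r) ≤ (thetaIP φ ψ i P x + thetaIP φ ψ i P (xr r))/2 :=
            thetaIP_midpoint φ ψ i P hφ0 hψ0 hφconv hψconv x (xr r)
          _ ≤ (1/2)*t + (1/2)*(b r) := by
            have h2 := hti i hij
            have h3 : thetaIP φ ψ i P (xr r) ≤ b r := hPle i P (xr r)
            linarith
    have h2 : thetaIP φ ψ j P (m r) ≤ c r := hPle j P (m r)
    have h3 : c r ≤ thetaIP φ ψ j P (m r) := by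
      rcases le_total ((1/2)*t + (1/2)*(b r)) (thetaIP φ ψ j P (m r)) with h | h
      · rwa [max_eq_left h] at h1
      · rw [max_eq_right h] at h1; linarith
    exact le_antisymm h2 h3
  -- the "selected" differences
  set D : ℕ → ℝ := fun r => (1/2)*thetaIP φ ψ j P x^2 + (1/2)*thetaIP φ ψ j P (xr r)^2
    - thetaIP φ ψ j P (m r)^2 with hDdef
  have hD0 : ∀ r : ℕ, 0 ≤ D r := by
    intro r
    have h1 := thetaIP_midpoint φ ψ j P hφ0 hψ0 hφconv hψconv x (xr r)
    have h2 := hIP0 j P (m r)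
    have h3 : D r = (1/2)*thetaIP φ ψ j P x^2 + (1/2)*thetaIP φ ψ j P (xr r)^2
        - thetaIP φ ψ j P (m r)^2 := rfl
    rw [h3]
    nlinarith [pow_le_pow_left₀ h2 h1 2,
      sq_nonneg (thetaIP φ ψ j P x - thetaIP φ ψ j P (xr r))]
  have hDd : ∀ᶠ r in atTop, D r ≤ d P r := by
    filter_upwards [hev] with r hr
    have heq := hcmax r hr
    have h1 : thetaIP φ ψ j P x ≤ a := hPle j P x
    have h2 : thetaIP φ ψ j P (xr r) ≤ b r := hPle j P (xr r)
    have h3 : thetaIP φ ψ j P x^2 ≤ a^2 := pow_le_pow_left₀ (hIP0 _ _ _) h1 2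
    have h4 : thetaIP φ ψ j P (xr r)^2 ≤ (b r)^2 := pow_le_pow_left₀ (hIP0 _ _ _) h2 2
    have h5 : D r = (1/2)*thetaIP φ ψ j P x^2 + (1/2)*thetaIP φ ψ j P (xr r)^2
        - thetaIP φ ψ j P (m r)^2 := rfl
    rw [h5, hdval r, heq]
    linarith
  have hD : Tendsto D atTop (𝓝 0) :=
    tendsto_of_tendsto_of_tendsto_of_le_of_le' tendsto_const_nhds hdP
      (Eventually.of_forall hD0) hDd
  -- conclude for ψ j
  have hsqIP : ∀ y : Z, thetaIP φ ψ j P y^2 = (φ j y^2 + (P:ℝ)⁻¹ * ψ j y^2)/2 :=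
    fun y => Real.sq_sqrt (by positivity)
  have hφm : ∀ r : ℕ, φ j (m r) ≤ (φ j x + φ j (xr r))/2 := by
    intro r
    have h := (hφconv j).2 (Set.mem_univ x) (Set.mem_univ (xr r))
      (by norm_num : (0:ℝ) ≤ 1/2) (by norm_num : (0:ℝ) ≤ 1/2) (by norm_num)
    simp only [smul_eq_mul] at h
    have hmr : m r = (1/2:ℝ) • x + (1/2:ℝ) • xr r := by rw [hmdef]; exact smul_add _ _ _
    rw [hmr]
    linarith
  have hψm : ∀ r : ℕ, ψ j (m r) ≤ (ψ j x + ψ j (xr r))/2 := by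
    intro r
    have h := (hψconv j).2 (Set.mem_univ x) (Set.mem_univ (xr r))
      (by norm_num : (0:ℝ) ≤ 1/2) (by norm_num : (0:ℝ) ≤ 1/2) (by norm_num)
    simp only [smul_eq_mul] at h
    have hmr : m r = (1/2:ℝ) • x + (1/2:ℝ) • xr r := by rw [hmdef]; exact smul_add _ _ _
    rw [hmr]
    linarith
  have hΦ0 : ∀ r : ℕ, 0 ≤ (1/2)*φ j x^2 + (1/2)*φ j (xr r)^2 - φ j (m r)^2 := by
    intro r
    have h1 := pow_le_pow_left₀ (hφ0 j (m r)) (hφm r) 2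
    nlinarith [sq_nonneg (φ j x - φ j (xr r)), h1]
  have hΨ0 : ∀ r : ℕ, 0 ≤ (1/2)*ψ j x^2 + (1/2)*ψ j (xr r)^2 - ψ j (m r)^2 := by
    intro r
    have h1 := pow_le_pow_left₀ (hψ0 j (m r)) (hψm r) 2
    nlinarith [sq_nonneg (ψ j x - ψ j (xr r)), h1]
  have hub2 : ∀ r : ℕ, (1/2)*ψ j x^2 + (1/2)*ψ j (xr r)^2 - ψ j (m r)^2 ≤ 2*(P:ℝ)*D r := by
    intro r
    have h2 : D r = (1/2)*((1/2)*φ j x^2 + (1/2)*φ j (xr r)^2 - φ j (m r)^2)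
        + ((P:ℝ)⁻¹/2)*((1/2)*ψ j x^2 + (1/2)*ψ j (xr r)^2 - ψ j (m r)^2) := by
      have h5 : D r = (1/2)*thetaIP φ ψ j P x^2 + (1/2)*thetaIP φ ψ j P (xr r)^2
          - thetaIP φ ψ j P (m r)^2 := rfl
      rw [h5, hsqIP, hsqIP, hsqIP]
      ring
    have hPinv : (P:ℝ) * (P:ℝ)⁻¹ = 1 := mul_inv_cancel₀ (ne_of_gt hPpos)
    have h3 : 2*(P:ℝ)*D r = (P:ℝ)*((1/2)*φ j x^2 + (1/2)*φ j (xr r)^2 - φ j (m r)^2)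
        + ((1/2)*ψ j x^2 + (1/2)*ψ j (xr r)^2 - ψ j (m r)^2) := by
      rw [h2]
      field_simp
    have h4 : 0 ≤ (P:ℝ)*((1/2)*φ j x^2 + (1/2)*φ j (xr r)^2 - φ j (m r)^2) :=
      mul_nonneg (le_of_lt hPpos) (hΦ0 r)
    linarith
  have hup2 : Tendsto (fun r => 2*(P:ℝ)*D r) atTop (𝓝 0) := by
    have h1 := hD.const_mul (2*(P:ℝ))
    rw [mul_zero] at h1
    exact h1
  exact tendsto_of_tendsto_of_tendsto_of_le_of_le tendsto_const_nhds hup2 hΨ0 hub2
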